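/- Let n, m ∈ ℕ with 0 ≤ m ≤ n, and let t1, t2, t4, z ∈ ℂ. Assume t1+t2, t1+t4, and t1+1−t4−m all lie outside {0, −1, …, −(n−1)}, and assume t2+t1, t2+1−t4, and t2+t4+m all lie outside {0, −1, …, −(n−m−1)} (so that both Wilson polynomials below are defined). Then the following partial factorization holds: (t1+t2)_{n−m} · W_n(z; t1, t2, 1−t4−m, t4) = (−1)^m · (t4+z)_m · (t4−z)_m · (t1+t2)_n · W_{n−m}(z; t2, t1, 1−t4, t4+m). In particular the degree-n Wilson polynomial (in x = −z²) factors as the product of ∏_{j=1}^{m} [x + (t4+j−1)²] and a Wilson polynomial of degree n−m. -/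

import Mathlib

open Finset

/-- Pochhammer symbol `(a)_k = a (a+1) ⋯ (a+k-1)`. -/
noncomputable def poch (a : ℂ) (k : ℕ) : ℂ := ∏ i ∈ Finset.range k, (a + i)

/-- The Wilson polynomial `W_n(z; t1,t2,t3,t4)` in the variable `z` (with `x = -z²`). -/
noncomputable def wilson (n : ℕ) (z t1 t2 t3 t4 : ℂ) : ℂ :=
  poch (t1 + t2) n * poch (t1 + t3) n * poch (t1 + t4) n *
    ∑ k ∈ Finset.range (n + 1),
      (poch (-(n : ℂ)) k * poch (t1 + t2 + t3 + t4 + (n : ℂ) - 1) k *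
        poch (t1 + z) k * poch (t1 - z) k) /
      ((k.factorial : ℂ) * poch (t1 + t2) k * poch (t1 + t3) k * poch (t1 + t4) k)

/-!
Clearing the denominators of `wilson` gives `wilsonPoly`, which is symmetric in its first and last
parameters: expanding `(a + z)_k (a - z)_k` in the basis `(d + z)_j (d - z)_j` is a Pfaff–Saalschütz
sum, and after exchanging the order of summation the inner sum is a balanced Saalschütz sum again.
After this exchange both sides of the factorization are expansions in `(t4 + z)_k (t4 - z)_k`. With
third parameter `1 - t4 - m` the factor `(1 - m + k)_(n - k)` kills the terms with `k < m`, and the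
remaining terms, shifted by `m`, are `(t4 + z)_m (t4 - z)_m` times those of degree `n - m`.
-/

open Nat

lemma poch_zero (a : ℂ) : poch a 0 = 1 := prod_range_zero _

lemma poch_succ (a : ℂ) (k : ℕ) : poch a (k + 1) = poch a k * (a + k) := prod_range_succ _ _

lemma poch_add (a : ℂ) (j k : ℕ) : poch a (j + k) = poch a j * poch (a + j) k := by
  simp only [poch, prod_range_add, Nat.cast_add, add_assoc]

lemma poch_succ' (a : ℂ) (k : ℕ) : poch a (k + 1) = a * poch (a + 1) k := by
  rw [add_comm, poch_add]; simp [poch]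

lemma poch_eq_zero_iff {a : ℂ} {k : ℕ} : poch a k = 0 ↔ ∃ i < k, a + i = 0 := by
  simp [poch, prod_eq_zero_iff]

lemma poch_one_sub_sub (y : ℂ) (r : ℕ) : poch (1 - y - r) r = (-1) ^ r * poch y r := by
  induction r with
  | zero => simp [poch_zero]
  | succ r ih =>
    rw [poch_succ', poch_succ, pow_succ,
      show 1 - y - ↑(r + 1) + 1 = 1 - y - r by push_cast; ring, ih]
    push_cast; ring

lemma poch_natCast_add_one (x r : ℕ) : poch (x + 1) r = (r ! * (x + r).choose r : ℕ) := by
  rw [← ascFactorial_eq_factorial_mul_choose, ascFactorial_eq_prod_range, poch]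
  push_cast; simp only [add_right_comm]

lemma poch_neg_natCast {n k : ℕ} (h : k ≤ n) : poch (-n) k = (-1) ^ k * k ! * n.choose k := by
  have := poch_one_sub_sub ((n - k : ℕ) + 1) k
  rw [poch_natCast_add_one, Nat.sub_add_cancel h, Nat.cast_sub h,
    show (1 : ℂ) - (n - k + 1) - k = -n by ring] at this
  rw [this]; push_cast; ring

lemma choose_mul_poch_natCast_add_one (m l r : ℕ) :
    ((m + l + r).choose (m + l) : ℂ) * poch (l + 1) r
      = (l + r).choose l * poch ((m + l : ℕ) + 1) r := by
  rw [poch_natCast_add_one, poch_natCast_add_one, ← Nat.choose_symm_add, ← Nat.choose_symm_add]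
  push_cast; ring

section Saalschutz

variable (a b c : ℂ)

noncomputable def saalschutzTerm (k j : ℕ) : ℂ :=
  k.choose j * poch a j * poch b j * poch (c + j) (k - j) * poch (c - a - b) (k - j)

lemma saalschutzTerm_of_lt {k j : ℕ} (h : k < j) : saalschutzTerm a b c k j = 0 := by
  simp [saalschutzTerm, Nat.choose_eq_zero_of_lt h]

/- Zeilberger's certificate: with `T = saalschutzTerm a b c` and `g k j = (a + j) (b + j) T k j`,
`T (k + 1) j = (c - a + k) (c - b + k) T k j + g k (j - 1) - g k j`, so the sums telescope. -/
lemma saalschutzTerm_succ_zero (k : ℕ) :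
    saalschutzTerm a b c (k + 1) 0 + a * b * saalschutzTerm a b c k 0
      = (c - a + k) * (c - b + k) * saalschutzTerm a b c k 0 := by
  simp only [saalschutzTerm, Nat.choose_zero_right, poch_zero, Nat.sub_zero, poch_succ]
  push_cast; ring

lemma saalschutzTerm_succ_succ {k j : ℕ} (h : j ≤ k) :
    saalschutzTerm a b c (k + 1) (j + 1)
        + (a + (j + 1 : ℕ)) * (b + (j + 1 : ℕ)) * saalschutzTerm a b c k (j + 1)
      = (c - a + k) * (c - b + k) * saalschutzTerm a b c k (j + 1)
        + (a + j) * (b + j) * saalschutzTerm a b c k j := by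
  rcases h.eq_or_lt with rfl | hlt
  · rw [saalschutzTerm_of_lt a b c j.lt_succ_self]
    simp only [saalschutzTerm, Nat.choose_self, Nat.sub_self, poch_zero, poch_succ]
    push_cast; ring
  obtain ⟨r, rfl⟩ : ∃ r, k = j + 1 + r := ⟨k - (j + 1), by omega⟩
  have hpascal := Nat.choose_succ_succ (j + 1 + r) j
  have habsorb := Nat.choose_succ_right_eq (j + 1 + r) j
  rw [show j + 1 + r - j = r + 1 by omega] at habsorb
  simp only [saalschutzTerm, show j + 1 + r + 1 - (j + 1) = r + 1 by omega,
    show j + 1 + r - (j + 1) = r by omega, show j + 1 + r - j = r + 1 by omega, hpascal]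
  rw [poch_succ' (c + j), show c + j + 1 = c + (j + 1 : ℕ) by push_cast; ring]
  simp only [poch_succ]
  have habsorb' : ((j + 1 + r).choose (j + 1) : ℂ) * (j + 1) = (j + 1 + r).choose j * (r + 1) :=
    mod_cast habsorb
  push_cast
  linear_combination -(poch a j * (a + j) * poch b j * (b + j) * poch (c + (j + 1)) r
    * poch (c - a - b) r * (c - a - b + r)) * habsorb'

lemma sum_saalschutzTerm_succ (k : ℕ) :
    ∑ j ∈ range (k + 2), saalschutzTerm a b c (k + 1) j
      = (c - a + k) * (c - b + k) * ∑ j ∈ range (k + 1), saalschutzTerm a b c k j := by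
  set g : ℕ → ℂ := fun j ↦ (a + j) * (b + j) * saalschutzTerm a b c k j with hg
  have htel : ∑ j ∈ range (k + 2), (saalschutzTerm a b c (k + 1) j + g j)
      = (c - a + k) * (c - b + k) * ∑ j ∈ range (k + 2), saalschutzTerm a b c k j
        + ∑ j ∈ range (k + 1), g j := by
    rw [sum_range_succ' _ (k + 1), sum_range_succ' (saalschutzTerm a b c k) (k + 1),
      sum_congr rfl fun j hj ↦ saalschutzTerm_succ_succ a b c (mem_range_succ_iff.mp hj)]
    simp only [hg, Nat.cast_zero, add_zero]
    rw [sum_add_distrib, mul_add ((c - a + k) * (c - b + k)), mul_sum]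
    linear_combination saalschutzTerm_succ_zero a b c k
  rw [sum_add_distrib, sum_range_succ g, sum_range_succ (saalschutzTerm a b c k),
    saalschutzTerm_of_lt a b c k.lt_succ_self] at htel
  simp only [hg, saalschutzTerm_of_lt a b c k.lt_succ_self] at htel
  linear_combination htel

theorem saalschutz (k : ℕ) :
    ∑ j ∈ range (k + 1),
        k.choose j * poch a j * poch b j * poch (c + j) (k - j) * poch (c - a - b) (k - j)
      = poch (c - a) k * poch (c - b) k := by
  change ∑ j ∈ range (k + 1), saalschutzTerm a b c k j = _
  induction k with
  | zero => simp [saalschutzTerm, poch_zero]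
  | succ k ih =>
    rw [sum_saalschutzTerm_succ, ih, poch_succ (c - a), poch_succ (c - b)]
    ring

end Saalschutz

theorem saalschutz_balanced (N : ℕ) (A B C D : ℂ) (h : C + D = 1 + A + B - N) :
    ∑ i ∈ range (N + 1), (-1) ^ i * N.choose i * poch A i * poch B i * poch (C + i) (N - i)
        * poch (D + i) (N - i)
      = poch (C - B) N * poch (D - B) N := by
  have hD : ∀ i ≤ N, poch (D + i) (N - i) = (-1) ^ (N - i) * poch (C - A - B) (N - i) := by
    intro i hi
    rw [← poch_one_sub_sub, Nat.cast_sub hi]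
    congr 1
    linear_combination h
  rw [show D - B = 1 - (C - A) - N by linear_combination h, poch_one_sub_sub, mul_left_comm,
    mul_comm (poch (C - B) N), ← saalschutz, mul_sum]
  refine sum_congr rfl fun i hi ↦ ?_
  have hi : i ≤ N := mem_range_succ_iff.mp hi
  rw [hD i hi, ← Nat.sub_add_cancel hi, pow_add, Nat.add_sub_cancel]
  ring

/- `wilson` with the denominators `k! (a + b)_k (a + c)_k (a + d)_k` cancelled against its
prefactor; it needs no nondegeneracy conditions. -/
noncomputable def wilsonPoly (n : ℕ) (z a b c d : ℂ) : ℂ :=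
  ∑ k ∈ range (n + 1), (-1) ^ k * n.choose k * poch (a + b + c + d + n - 1) k *
    poch (a + z) k * poch (a - z) k *
    poch (a + b + k) (n - k) * poch (a + c + k) (n - k) * poch (a + d + k) (n - k)

lemma poch_add_mul_poch_sub (a d z : ℂ) (k : ℕ) :
    poch (a + z) k * poch (a - z) k
      = ∑ j ∈ range (k + 1), k.choose j * poch (d + z) j * poch (d - z) j
          * poch (a + d + j) (k - j) * poch (a - d) (k - j) := by
  have := saalschutz (d + z) (d - z) (a + d) k
  rw [show a + d - (d + z) - (d - z) = a - d by ring, show a + d - (d + z) = a - z by ring,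
    show a + d - (d - z) = a + z by ring, mul_comm (poch (a - z) k)] at this
  exact this.symm

theorem wilsonPoly_swap_first_last (n : ℕ) (z a b c d : ℂ) :
    wilsonPoly n z a b c d = wilsonPoly n z d b c a := by
  set s := a + b + c + d + n - 1
  let G : ℕ → ℕ → ℂ := fun j i ↦
    ((-1) ^ j * n.choose j * poch s j * poch (d + z) j * poch (d - z) j * poch (a + d + j) (n - j))
      * ((-1) ^ i * (n - j).choose i * poch (s + j) i * poch (a - d) i
        * poch (a + b + j + i) (n - j - i) * poch (a + c + j + i) (n - j - i))
  have hdouble :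
      wilsonPoly n z a b c d = ∑ k ∈ range (n + 1), ∑ j ∈ range (k + 1), G j (k - j) := by
    refine sum_congr rfl fun k hk ↦ ?_
    trans (poch (a + z) k * poch (a - z) k) * ((-1) ^ k * n.choose k * poch s k
      * poch (a + b + k) (n - k) * poch (a + c + k) (n - k) * poch (a + d + k) (n - k))
    · ring
    rw [poch_add_mul_poch_sub a d z, sum_mul]
    refine sum_congr rfl fun j hj ↦ ?_
    obtain ⟨i, rfl⟩ := Nat.exists_eq_add_of_le (mem_range_succ_iff.mp hj)
    have hk := mem_range_succ_iff.mp hk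
    have hchoose : (n.choose (j + i) : ℂ) * (j + i).choose j = n.choose j * (n - j).choose i := by
      have := Nat.choose_mul (n := n) (Nat.le_add_right j i)
      rw [Nat.add_sub_cancel_left] at this
      exact_mod_cast this
    have hmerge :
        poch (a + d + j) i * poch (a + d + j + i) (n - j - i) = poch (a + d + j) (n - j) := by
      rw [← poch_add, Nat.add_sub_cancel' (by omega)]
    simp only [G, Nat.add_sub_cancel_left, pow_add, poch_add s j i, Nat.sub_add_eq, Nat.cast_add,
      ← add_assoc, ← hmerge]
    linear_combination (-1) ^ j * (-1) ^ i * poch s j * poch (s + j) i * poch (d + z) j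
      * poch (d - z) j * poch (a - d) i * poch (a + b + j + i) (n - j - i)
      * poch (a + c + j + i) (n - j - i) * poch (a + d + j) i * poch (a + d + j + i) (n - j - i)
      * hchoose
  rw [hdouble, sum_range_diag_flip]
  refine sum_congr rfl fun j hj ↦ ?_
  have hj := mem_range_succ_iff.mp hj
  rw [← mul_sum, show n + 1 - j = n - j + 1 by omega,
    saalschutz_balanced _ _ _ _ _ (by push_cast [s, Nat.cast_sub hj]; ring),
    show a + b + j - (a - d) = d + b + j by ring, show a + c + j - (a - d) = d + c + j by ring,
    show d + b + c + a + n - 1 = s by ring, add_comm d a]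
  ring

lemma wilson_eq_wilsonPoly (n : ℕ) (z a b c d : ℂ) (hb : ∀ k < n, a + b + k ≠ 0)
    (hc : ∀ k < n, a + c + k ≠ 0) (hd : ∀ k < n, a + d + k ≠ 0) :
    wilson n z a b c d = wilsonPoly n z a b c d := by
  rw [wilson, wilsonPoly, mul_sum]
  refine sum_congr rfl fun k hk ↦ ?_
  have hk := mem_range_succ_iff.mp hk
  have hne : ∀ x : ℂ, (∀ i < n, x + i ≠ 0) → poch x k ≠ 0 := fun x hx h0 ↦ by
    obtain ⟨i, hi, hxi⟩ := poch_eq_zero_iff.mp h0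
    exact hx i (by omega) hxi
  have := hne _ hb
  have := hne _ hc
  have := hne _ hd
  have : (k ! : ℂ) ≠ 0 := Nat.cast_ne_zero.mpr k.factorial_ne_zero
  have hsplit : ∀ x, poch x n = poch x k * poch (x + k) (n - k) := fun x ↦ by
    rw [← poch_add, Nat.add_sub_cancel' hk]
  rw [hsplit, hsplit, hsplit, poch_neg_natCast hk]
  field_simp

theorem wilsonPoly_partial_factorization (n m : ℕ) (hmn : m ≤ n) (t1 t2 t4 z : ℂ) :
    poch (t1 + t2) (n - m) * wilsonPoly n z t1 t2 (1 - t4 - m) t4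
      = (-1) ^ m * poch (t4 + z) m * poch (t4 - z) m * poch (t1 + t2) n
          * wilsonPoly (n - m) z t2 t1 (1 - t4) (t4 + m) := by
  rw [wilsonPoly_swap_first_last n, wilsonPoly_swap_first_last (n - m)]
  obtain ⟨p, rfl⟩ := Nat.exists_eq_add_of_le hmn
  simp only [wilsonPoly, Nat.add_sub_cancel_left]
  rw [show m + p + 1 = m + (p + 1) by ring, sum_range_add, sum_eq_zero, zero_add, mul_sum, mul_sum]
  · refine sum_congr rfl fun l hl ↦ ?_
    obtain ⟨r, rfl⟩ := Nat.exists_eq_add_of_le (mem_range_succ_iff.mp hl)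
    rw [show m + (l + r) - (m + l) = r by omega, Nat.add_sub_cancel_left,
      show t4 + t2 + (1 - t4 - m) + t1 + (m + (l + r) : ℕ) - 1 = t1 + t2 + (l + r : ℕ) by
        push_cast; ring,
      show t4 + m + t1 + (1 - t4) + t2 + (l + r : ℕ) - 1 = t1 + t2 + (m + (l + r) : ℕ) by
        push_cast; ring,
      show t4 + (1 - t4 - m) + (m + l : ℕ) = l + 1 by push_cast; ring,
      show t4 + m + (1 - t4) + l = (m + l : ℕ) + 1 by push_cast; ring,
      show t4 + t2 + (m + l : ℕ) = t4 + m + t2 + l by push_cast; ring,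
      show t4 + t1 + (m + l : ℕ) = t4 + m + t1 + l by push_cast; ring,
      poch_add (t4 + z), poch_add (t4 - z), add_right_comm t4 z, sub_add_eq_add_sub,
      ← add_assoc m l r]
    have hscalar : poch (t1 + t2) (l + r) * poch (t1 + t2 + (l + r : ℕ)) (m + l)
        = poch (t1 + t2) (m + l + r) * poch (t1 + t2 + (m + l + r : ℕ)) l := by
      rw [← poch_add, ← poch_add, show l + r + (m + l) = m + l + r + l by ring]
    linear_combination (-1) ^ (m + l) * poch (t4 + z) m * poch (t4 + m + z) l * poch (t4 - z) m
      * poch (t4 + m - z) l * poch (t4 + m + t2 + l) r * poch (t4 + m + t1 + l) r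
      * (poch (t1 + t2) (l + r) * poch (t1 + t2 + (l + r : ℕ)) (m + l)
          * choose_mul_poch_natCast_add_one m l r
        + (l + r).choose l * poch ((m + l : ℕ) + 1) r * hscalar)
  · intro k hk
    -- for `k < m` the factor `(1 - m + k)_(n - k)` runs through `0`
    obtain ⟨q, rfl⟩ := Nat.exists_eq_add_of_lt (mem_range.mp hk)
    have : poch (t4 + (1 - t4 - ↑(k + q + 1)) + k) (k + q + 1 + p - k) = 0 :=
      poch_eq_zero_iff.mpr ⟨q, by omega, by push_cast; ring⟩
    simp only [this, mul_zero, zero_mul]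

theorem wilson_partial_factorization (n m : ℕ) (hmn : m ≤ n) (t1 t2 t4 z : ℂ)
    (h12 : ∀ k : ℕ, k < n → t1 + t2 + k ≠ 0)
    (h14 : ∀ k : ℕ, k < n → t1 + t4 + k ≠ 0)
    (h13 : ∀ k : ℕ, k < n → t1 + 1 - t4 - (m : ℂ) + k ≠ 0)
    (h21 : ∀ k : ℕ, k < n - m → t2 + t1 + k ≠ 0)
    (h23 : ∀ k : ℕ, k < n - m → t2 + 1 - t4 + k ≠ 0)
    (h24 : ∀ k : ℕ, k < n - m → t2 + t4 + (m : ℂ) + k ≠ 0) :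
    poch (t1 + t2) (n - m) * wilson n z t1 t2 (1 - t4 - (m : ℂ)) t4
      = (-1 : ℂ) ^ m * poch (t4 + z) m * poch (t4 - z) m * poch (t1 + t2) n *
          wilson (n - m) z t2 t1 (1 - t4) (t4 + (m : ℂ)) := by
  have h13' : ∀ k : ℕ, k < n → t1 + (1 - t4 - m) + k ≠ 0 := fun k hk ↦ by
    convert h13 k hk using 1; ring
  have h23' : ∀ k : ℕ, k < n - m → t2 + (1 - t4) + k ≠ 0 := fun k hk ↦ by
    convert h23 k hk using 1; ring
  have h24' : ∀ k : ℕ, k < n - m → t2 + (t4 + m) + k ≠ 0 := fun k hk ↦ by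
    convert h24 k hk using 1; ring
  rw [wilson_eq_wilsonPoly _ _ _ _ _ _ h12 h13' h14,
    wilson_eq_wilsonPoly _ _ _ _ _ _ h21 h23' h24']
  exact wilsonPoly_partial_factorization n m hmn t1 t2 t4 z
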